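/- Let π be the softmax of A/τ on a finite action set and H(π) = -Σ_a π(a) log π(a) the Shannon entropy. Then the gradient of H(π) with respect to A satisfies, for the policy-gradient-style expression: Σ_a π(a) (A(a) - Σ_b π(b) A(b)) · ∇_A log π(a) = -τ ∇_A H(π), where ∇_A denotes the gradient with respect to the vector A ∈ ℝ^𝒜. -/

import Mathlib

/-- Softmax with temperature. -/
noncomputable def smax {𝒜 : Type*} [Fintype 𝒜] (τ : ℝ) (A : 𝒜 → ℝ) (a : 𝒜) : ℝ :=
  Real.exp (A a / τ) / ∑ b, Real.exp (A b / τ)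

/-!
Write `s = smax τ A` and `E_s X = ∑ b, s b * X b`. Along any curve `f` of logits,
`ṡ_a = s_a (ḟ_a - E_s ḟ) / τ`, and since `log s_a = f_a / τ - log Z` while the centered weights
`s_a (ḟ_a - E_s ḟ)` sum to zero, the entropy moves at rate `-Cov_s(ḟ, f) / τ²`.
For `f = update A c`, i.e. `ḟ = Pi.single c 1`, the left-hand side is `Cov_s(A, ḟ) / τ`,
and the theorem is the symmetry of the covariance.
-/

open Finset Real

section Softmax

variable {𝒜 : Type*} [Fintype 𝒜] [Nonempty 𝒜]

lemma sum_exp_div_pos (τ : ℝ) (A : 𝒜 → ℝ) : 0 < ∑ b, exp (A b / τ) :=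
  sum_pos (fun _ _ => exp_pos _) univ_nonempty

lemma smax_pos (τ : ℝ) (A : 𝒜 → ℝ) (a : 𝒜) : 0 < smax τ A a :=
  div_pos (exp_pos _) (sum_exp_div_pos τ A)

lemma sum_smax (τ : ℝ) (A : 𝒜 → ℝ) : ∑ a, smax τ A a = 1 := by
  simp only [smax, ← sum_div, div_self (sum_exp_div_pos τ A).ne']

lemma log_smax (τ : ℝ) (A : 𝒜 → ℝ) (a : 𝒜) :
    log (smax τ A a) = A a / τ - log (∑ b, exp (A b / τ)) := by
  rw [smax, log_div (exp_ne_zero _) (sum_exp_div_pos τ A).ne', log_exp]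

lemma sum_smax_mul_sub_mul_add_const (τ : ℝ) (A X Y : 𝒜 → ℝ) (k : ℝ) :
    ∑ a, smax τ A a * (X a - ∑ b, smax τ A b * X b) * (Y a + k)
      = ∑ a, smax τ A a * (X a - ∑ b, smax τ A b * X b) * Y a := by
  have hcentered : ∑ a, smax τ A a * (X a - ∑ b, smax τ A b * X b) = 0 := by
    simp only [mul_sub, sum_sub_distrib, ← sum_mul, sum_smax, one_mul, sub_self]
  simp only [mul_add, sum_add_distrib, ← sum_mul, hcentered, zero_mul, add_zero]

lemma sum_smax_mul_sub_mul_comm (τ : ℝ) (A X Y : 𝒜 → ℝ) :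
    ∑ a, smax τ A a * (X a - ∑ b, smax τ A b * X b) * Y a
      = ∑ a, smax τ A a * (Y a - ∑ b, smax τ A b * Y b) * X a := by
  rw [← sum_smax_mul_sub_mul_add_const τ A X Y (-∑ b, smax τ A b * Y b),
    ← sum_smax_mul_sub_mul_add_const τ A Y X (-∑ b, smax τ A b * X b)]
  exact sum_congr rfl fun a _ => by ring

variable {f : ℝ → 𝒜 → ℝ} {f' : 𝒜 → ℝ} {x : ℝ}

lemma hasDerivAt_smax (hf : HasDerivAt f f' x) (τ : ℝ) (a : 𝒜) :
    HasDerivAt (fun y => smax τ (f y) a)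
      (smax τ (f x) a * (f' a - ∑ b, smax τ (f x) b * f' b) / τ) x := by
  have hexp : ∀ b, HasDerivAt (fun y => exp (f y b / τ)) (exp (f x b / τ) * (f' b / τ)) x :=
    fun b => ((hasDerivAt_pi.mp hf b).div_const τ).exp
  have hZ := HasDerivAt.fun_sum (u := univ) fun b _ => hexp b
  have hZ0 := (sum_exp_div_pos τ (f x)).ne'
  refine ((hexp a).fun_div hZ hZ0).congr_deriv ?_
  simp only [smax, div_mul_eq_mul_div, ← sum_div, mul_div_assoc']
  field_simp

lemma hasDerivAt_entropy_smax (hf : HasDerivAt f f' x) (τ : ℝ) :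
    HasDerivAt (fun y => -∑ a, smax τ (f y) a * log (smax τ (f y) a))
      (-(∑ a, smax τ (f x) a * (f' a - ∑ b, smax τ (f x) b * f' b) * f x a) / τ ^ 2) x := by
  have hs := hasDerivAt_smax hf τ
  refine (HasDerivAt.fun_sum (u := univ) fun a _ =>
    (hs a).fun_mul ((hs a).log (smax_pos τ (f x) a).ne')).neg.congr_deriv ?_
  set E := ∑ b, smax τ (f x) b * f' b
  set logZ := log (∑ b, exp (f x b / τ))
  have hterm : ∀ a, smax τ (f x) a * (f' a - E) / τ * log (smax τ (f x) a)
        + smax τ (f x) a * (smax τ (f x) a * (f' a - E) / τ / smax τ (f x) a)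
      = smax τ (f x) a * (f' a - E) * (f x a / τ + (1 - logZ)) / τ := by
    intro a
    have := (smax_pos τ (f x) a).ne'
    rw [log_smax]
    field_simp
    ring
  rw [sum_congr rfl fun a _ => hterm a, ← sum_div, sum_smax_mul_sub_mul_add_const]
  simp only [mul_div_assoc', ← sum_div]
  ring

end Softmax

theorem stmt2_general {𝒜 : Type*} [Fintype 𝒜] [Nonempty 𝒜] [DecidableEq 𝒜]
    (A : 𝒜 → ℝ) (τ : ℝ) (c : 𝒜) (h' : ℝ)
    (hH : HasDerivAt
      (fun x : ℝ =>
        -∑ a, smax τ (Function.update A c x) a * Real.log (smax τ (Function.update A c x) a))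
      h' (A c)) :
    ∑ a, smax τ A a * (A a - ∑ b, smax τ A b * A b) *
        (((if a = c then (1 : ℝ) else 0) - smax τ A c) / τ)
      = -τ * h' := by
  have hE := hasDerivAt_entropy_smax (hasDerivAt_update A c (A c)) τ
  simp only [Function.update_eq_self, Pi.single_apply] at hE
  calc _ = (∑ a, smax τ A a * (A a - ∑ b, smax τ A b * A b) *
          ((if a = c then (1 : ℝ) else 0) + -smax τ A c)) / τ := by
        rw [sum_div]
        exact sum_congr rfl fun a _ => by ring
    _ = (∑ a, smax τ A a * (A a - ∑ b, smax τ A b * A b) *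
          (if a = c then (1 : ℝ) else 0)) / τ := by
        rw [sum_smax_mul_sub_mul_add_const]
    _ = -τ * h' := by
        rw [sum_smax_mul_sub_mul_comm, hH.unique hE]
        field_simp

/-- Σ_a π(a)(A(a) - E_π[A]) ∇_A log π(a) = -τ ∇_A H(π), coordinatewise in c. -/
theorem stmt2 {𝒜 : Type*} [Fintype 𝒜] [Nonempty 𝒜] [DecidableEq 𝒜]
    (A : 𝒜 → ℝ) (τ : ℝ) (hτ : 0 < τ) (c : 𝒜) (h' : ℝ)
    (hH : HasDerivAt
      (fun x : ℝ =>
        -∑ a, smax τ (Function.update A c x) a * Real.log (smax τ (Function.update A c x) a))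
      h' (A c)) :
    ∑ a, smax τ A a * (A a - ∑ b, smax τ A b * A b) *
        (((if a = c then (1 : ℝ) else 0) - smax τ A c) / τ)
      = -τ * h' :=
  stmt2_general A τ c h' hH
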